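/- arXiv:2003.08323 — 2 statements merged into one kernel-verified Lean document; each statement's English description precedes it below -/
import Mathlib

section
/- If dr ∈ ℝ³ is a critical point of the normal curvature k_η restricted to the plane {v : ⟨η, v⟩ = 0} (in the sense of Lagrange multipliers, ∇k_η(dr) = λ·∇G(dr) with G(v) = ⟨η, v⟩), then dr satisfies the eigenvector equation 2⟨Dη·dr, dr⟩·dr − ⟨dr, dr⟩·(Dη + Dηᵀ)·dr + ⟨dr, dr⟩·⟨(Dη + Dηᵀ)·dr, η⟩·η = 0. -/
/-!
The gradient of the Rayleigh quotient `v ↦ ⟨A v, v⟩ / ⟨v, v⟩` at `x ≠ 0` is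
`(⟨x, x⟩ (A + Aᵀ) x - 2 ⟨A x, x⟩ x) / ⟨x, x⟩²`. The Lagrange condition says that the gradient
of `k_η = -(Rayleigh quotient)` at `dr` is a multiple of `η`; as `η` is a unit vector, that
multiple is the component of the gradient along `η`, which is `-⟨(A + Aᵀ) dr, η⟩ / ⟨dr, dr⟩`
because `dr ⊥ η`. Clearing the denominator gives the eigenvector equation.
-/

open Matrix

section DotProduct

variable {ι : Type*} [Fintype ι]

noncomputable def dotProductCLM (w : ι → ℝ) : (ι → ℝ) →L[ℝ] ℝ :=
  ∑ i, w i • ContinuousLinearMap.proj i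

@[simp]
theorem dotProductCLM_apply (w u : ι → ℝ) : dotProductCLM w u = w ⬝ᵥ u := by
  simp [dotProductCLM, dotProduct]

theorem hasFDerivAt_mulVec_dotProduct_self (A : Matrix ι ι ℝ) (x : ι → ℝ) :
    HasFDerivAt (fun v => A *ᵥ v ⬝ᵥ v) (dotProductCLM ((A + Aᵀ) *ᵥ x)) x := by
  have hterm : ∀ i, HasFDerivAt (fun v => (A *ᵥ v) i * v i)
      ((A *ᵥ x) i • ContinuousLinearMap.proj i + x i • dotProductCLM (A i)) x := fun i => by
    have hrow : HasFDerivAt (fun v => (A *ᵥ v) i) (dotProductCLM (A i)) x := by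
      rw [show (fun v => (A *ᵥ v) i) = dotProductCLM (A i) from
        funext fun v => (dotProductCLM_apply _ _).symm]
      exact (dotProductCLM (A i)).hasFDerivAt
    exact hrow.mul (hasFDerivAt_apply i x)
  refine (HasFDerivAt.fun_sum fun i _ => hterm i).congr_fderiv ?_
  ext u
  rw [dotProductCLM_apply, add_mulVec, add_dotProduct, mulVec_transpose, ← dotProduct_mulVec]
  simp [dotProduct, mulVec, Finset.sum_add_distrib, mul_comm]

theorem hasFDerivAt_dotProduct_self [DecidableEq ι] (x : ι → ℝ) :
    HasFDerivAt (fun v => v ⬝ᵥ v) (dotProductCLM ((2 : ℝ) • x)) x := by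
  simpa [add_mulVec, two_smul] using hasFDerivAt_mulVec_dotProduct_self (1 : Matrix ι ι ℝ) x

theorem hasFDerivAt_rayleighQuotient [DecidableEq ι] (A : Matrix ι ι ℝ) {x : ι → ℝ}
    (hx : x ≠ 0) :
    HasFDerivAt (fun v => (A *ᵥ v ⬝ᵥ v) / (v ⬝ᵥ v))
      (dotProductCLM (((x ⬝ᵥ x) ^ 2)⁻¹ •
        ((x ⬝ᵥ x) • ((A + Aᵀ) *ᵥ x) - (2 * (A *ᵥ x ⬝ᵥ x)) • x))) x := by
  have hN : x ⬝ᵥ x ≠ 0 := fun h => hx (dotProduct_self_eq_zero.mp h)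
  have hinv : HasFDerivAt (fun v => (v ⬝ᵥ v)⁻¹) _ x :=
    (hasDerivAt_inv hN).comp_hasFDerivAt (f := fun v => v ⬝ᵥ v) x (hasFDerivAt_dotProduct_self x)
  simp only [div_eq_mul_inv]
  refine ((hasFDerivAt_mulVec_dotProduct_self A x).mul hinv).congr_fderiv ?_
  ext u
  simp only [neg_smul, smul_neg, _root_.add_apply, _root_.neg_apply, _root_.smul_apply,
    dotProductCLM_apply, smul_dotProduct, smul_eq_mul, sub_dotProduct]
  field_simp
  ring

theorem eq_dotProduct_smul_of_eq_smul {w η : ι → ℝ} {c : ℝ} (h : w = c • η)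
    (hη : η ⬝ᵥ η = 1) : w = (w ⬝ᵥ η) • η := by
  simp [h, smul_dotProduct, hη]

end DotProduct

/-- A critical point (in the Lagrange multiplier sense) of the normal curvature restricted to
the plane `{v : ⟨η, v⟩ = 0}` satisfies the eigenvector equation. -/
theorem stmt_2 (η : Fin 3 → ℝ) (hη : η ⬝ᵥ η = 1) (A : Matrix (Fin 3) (Fin 3) ℝ)
    (dr : Fin 3 → ℝ) (hdr : dr ≠ 0) (htang : η ⬝ᵥ dr = 0)
    (kη : (Fin 3 → ℝ) → ℝ)
    (hk : ∀ v, kη v = -(A.mulVec v ⬝ᵥ v) / (v ⬝ᵥ v))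
    (G : (Fin 3 → ℝ) → ℝ) (hG : ∀ v, G v = η ⬝ᵥ v)
    (lagrange : ∃ l : ℝ, ∀ u, fderiv ℝ kη dr u = l * fderiv ℝ G dr u) :
    (2 * (A.mulVec dr ⬝ᵥ dr)) • dr - (dr ⬝ᵥ dr) • (A + Aᵀ).mulVec dr
      + ((dr ⬝ᵥ dr) * ((A + Aᵀ).mulVec dr ⬝ᵥ η)) • η = 0 := by
  obtain ⟨l, hl⟩ := lagrange
  set N := dr ⬝ᵥ dr
  set w := N • ((A + Aᵀ) *ᵥ dr) - (2 * (A *ᵥ dr ⬝ᵥ dr)) • dr with hw_def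
  have hkderiv : HasFDerivAt kη (dotProductCLM (-((N ^ 2)⁻¹ • w))) dr := by
    rw [show kη = fun v => -((A *ᵥ v ⬝ᵥ v) / (v ⬝ᵥ v)) from funext fun v => by rw [hk, neg_div]]
    refine (hasFDerivAt_rayleighQuotient A hdr).neg.congr_fderiv ?_
    ext u
    simp [w, N]
  have hGderiv : HasFDerivAt G (dotProductCLM η) dr := by
    rw [show G = dotProductCLM η from funext fun v => by rw [hG, dotProductCLM_apply]]
    exact (dotProductCLM η).hasFDerivAt
  have hgrad : -((N ^ 2)⁻¹ • w) = l • η := dotProduct_eq _ _ fun u => by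
    simpa [hkderiv.fderiv, hGderiv.fderiv, smul_dotProduct] using hl u
  have hN : N ≠ 0 := fun h => hdr (dotProduct_self_eq_zero.mp h)
  have hw : w = (-(N ^ 2 * l)) • η := by
    rw [neg_smul, ← smul_smul, ← hgrad, smul_neg, neg_neg, smul_inv_smul₀ (pow_ne_zero 2 hN)]
  have hwη : w ⬝ᵥ η = N * ((A + Aᵀ) *ᵥ dr ⬝ᵥ η) := by
    simp [hw_def, sub_dotProduct, smul_dotProduct, dotProduct_comm dr η, htang]
  calc _ = (N * ((A + Aᵀ) *ᵥ dr ⬝ᵥ η)) • η - w := by rw [hw_def]; abel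
    _ = 0 := by rw [← hwη, ← eq_dotProduct_smul_of_eq_smul hw hη, sub_self]
end

section
/- The η-principal direction equations are invariant under multiplication of the vector field by a nonvanishing scalar function: if f : ℝ³ → ℝ is a nonvanishing C¹ function and η is a C¹ vector field, then a nonzero vector dr with ⟨dr, η⟩ = 0 satisfies 2(D(fη)·dr, dr, fη) + ⟨curl(fη), fη⟩·⟨dr, dr⟩ = 0 if and only if it satisfies 2(Dη·dr, dr, η) + ⟨curl(η), η⟩·⟨dr, dr⟩ = 0. -/
/-!
Since `D(fη)·dr = ⟨∇f, dr⟩ η + f Dη·dr` and `curl(fη) = ∇f × η + f curl η`, every term carrying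
a derivative of `f` is a triple product with `η` in two slots and vanishes; the left-hand form is
therefore `f²` times the right-hand one, and `f` does not vanish.
-/

open Matrix

/-- The Jacobian matrix of a vector field on `ℝ³` at a point. -/
noncomputable def jac (X : (Fin 3 → ℝ) → (Fin 3 → ℝ)) (p : Fin 3 → ℝ) :
    Matrix (Fin 3) (Fin 3) ℝ :=
  Matrix.of fun i j => fderiv ℝ (fun q => X q i) p (Pi.single j 1)

/-- The curl of a vector field on `ℝ³` at a point. -/
noncomputable def curl (X : (Fin 3 → ℝ) → (Fin 3 → ℝ)) (p : Fin 3 → ℝ) : Fin 3 → ℝ :=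
  ![jac X p 2 1 - jac X p 1 2, jac X p 0 2 - jac X p 2 0, jac X p 1 0 - jac X p 0 1]

theorem fderiv_fun_smul_apply {𝕜 E F : Type*} [NontriviallyNormedField 𝕜]
    [NormedAddCommGroup E] [NormedSpace 𝕜 E] [NormedAddCommGroup F] [NormedSpace 𝕜 F]
    {f : E → 𝕜} {η : E → F} {r : E} (hf : DifferentiableAt 𝕜 f r)
    (hη : DifferentiableAt 𝕜 η r) (v : E) :
    fderiv 𝕜 (fun q => f q • η q) r v = fderiv 𝕜 f r v • η r + f r • fderiv 𝕜 η r v := by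
  simp [fderiv_fun_smul hf hη, add_comm]

theorem jac_apply {X : (Fin 3 → ℝ) → (Fin 3 → ℝ)} {p : Fin 3 → ℝ}
    (hX : DifferentiableAt ℝ X p) (i j : Fin 3) :
    jac X p i j = fderiv ℝ X p (Pi.single j 1) i := by
  simp [jac, fderiv_apply hX i]

noncomputable def principalDirectionForm (η : (Fin 3 → ℝ) → (Fin 3 → ℝ)) (r dr : Fin 3 → ℝ) : ℝ :=
  2 * (fderiv ℝ η r dr ⬝ᵥ (dr ⨯₃ η r)) + (curl η r ⬝ᵥ η r) * (dr ⬝ᵥ dr)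

section ScalarMultiple

variable {f : (Fin 3 → ℝ) → ℝ} {η : (Fin 3 → ℝ) → (Fin 3 → ℝ)} {r : Fin 3 → ℝ}

theorem jac_smul (hf : DifferentiableAt ℝ f r) (hη : DifferentiableAt ℝ η r) (i j : Fin 3) :
    jac (fun q => f q • η q) r i j
      = fderiv ℝ f r (Pi.single j 1) * η r i + f r * jac η r i j := by
  rw [jac_apply (hf.fun_smul hη), fderiv_fun_smul_apply hf hη, jac_apply hη]
  rfl

theorem curl_smul (hf : DifferentiableAt ℝ f r) (hη : DifferentiableAt ℝ η r) :
    curl (fun q => f q • η q) r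
      = (fun j => fderiv ℝ f r (Pi.single j 1)) ⨯₃ η r + f r • curl η r := by
  simp only [curl, jac_smul hf hη, cross_apply, smul_vec3, vec3_add, smul_eq_mul]
  refine vec3_eq ?_ ?_ ?_ <;> ring

theorem principalDirectionForm_smul (hf : DifferentiableAt ℝ f r) (hη : DifferentiableAt ℝ η r)
    (dr : Fin 3 → ℝ) :
    principalDirectionForm (fun q => f q • η q) r dr = f r ^ 2 * principalDirectionForm η r dr := by
  simp only [principalDirectionForm, fderiv_fun_smul_apply hf hη, curl_smul hf hη,
    map_smul, add_dotProduct, smul_dotProduct, dotProduct_smul, dotProduct_comm _ (η r),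
    dotProduct_add, dot_cross_self]
  ring

end ScalarMultiple

theorem stmt_6_general (η : (Fin 3 → ℝ) → (Fin 3 → ℝ)) (f : (Fin 3 → ℝ) → ℝ)
    (hη : ContDiff ℝ 1 η) (hf : ContDiff ℝ 1 f) (hf0 : ∀ r, f r ≠ 0)
    (r dr : Fin 3 → ℝ) :
    (2 * (fderiv ℝ (fun q => f q • η q) r dr ⬝ᵥ (dr ⨯₃ (f r • η r)))
        + (curl (fun q => f q • η q) r ⬝ᵥ (f r • η r)) * (dr ⬝ᵥ dr) = 0) ↔
    (2 * (fderiv ℝ η r dr ⬝ᵥ (dr ⨯₃ η r)) + (curl η r ⬝ᵥ η r) * (dr ⬝ᵥ dr) = 0) := by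
  change principalDirectionForm _ r dr = 0 ↔ principalDirectionForm η r dr = 0
  rw [principalDirectionForm_smul (hf.differentiable one_ne_zero r)
    (hη.differentiable one_ne_zero r), mul_eq_zero]
  simp [hf0 r]

/-- The η-principal direction equation is invariant under multiplication of the vector field
by a nonvanishing scalar function `f`. -/
theorem stmt_6 (η : (Fin 3 → ℝ) → (Fin 3 → ℝ)) (f : (Fin 3 → ℝ) → ℝ)
    (hη : ContDiff ℝ 1 η) (hf : ContDiff ℝ 1 f) (hf0 : ∀ r, f r ≠ 0)
    (r dr : Fin 3 → ℝ) (hdr : dr ≠ 0) (htang : dr ⬝ᵥ η r = 0) :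
    (2 * (fderiv ℝ (fun q => f q • η q) r dr ⬝ᵥ (dr ⨯₃ (f r • η r)))
        + (curl (fun q => f q • η q) r ⬝ᵥ (f r • η r)) * (dr ⬝ᵥ dr) = 0) ↔
    (2 * (fderiv ℝ η r dr ⬝ᵥ (dr ⨯₃ η r)) + (curl η r ⬝ᵥ η r) * (dr ⬝ᵥ dr) = 0) :=
  stmt_6_general η f hη hf hf0 r dr
end
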